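/- Let λ > 0 and let φ ∈ P^r satisfy φ' − λ φ − L̂(φ(t₁)) = L(1) on I. Then the identity 2λ ∫_I φ(t)² dt + φ(t₁)² = −φ(t₀)(2 + φ(t₀)) holds. -/

import Mathlib

open Polynomial MeasureTheory intervalIntegral

/-- The rescaled Legendre polynomials on `[t₀, t₁]`: `K i` has degree `i`,
`K i (t₁) = 1`, `K i (t₀) = (-1)^i`, and they are `L²(t₀,t₁)`-orthogonal with
`∫ K i ^ 2 = (t₁ - t₀)/(2 i + 1)`. -/
def IsLegendreBasis (t₀ t₁ : ℝ) (K : ℕ → Polynomial ℝ) : Prop :=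
  (∀ i, (K i).natDegree = i) ∧ (∀ i, (K i).eval t₁ = 1) ∧
  (∀ i, (K i).eval t₀ = (-1 : ℝ) ^ i) ∧
  (∀ i j, (∫ t in t₀..t₁, (K i).eval t * (K j).eval t) =
    if i = j then (t₁ - t₀) / (2 * (i : ℝ) + 1) else 0)

/-- The lifting operator `L(z) = (z/k) ∑_{i=0}^r (-1)^i (2i+1) K_i`. -/
noncomputable def Lop (t₀ t₁ : ℝ) (r : ℕ) (K : ℕ → Polynomial ℝ) (z : ℝ) : Polynomial ℝ :=
  Polynomial.C (z / (t₁ - t₀)) *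
    ∑ i ∈ Finset.range (r + 1), Polynomial.C ((-1 : ℝ) ^ i * (2 * (i : ℝ) + 1)) * K i

/-- The endpoint lifting operator `L̂(z) = (z/k) ∑_{i=0}^r (2i+1) K_i`. -/
noncomputable def LopE (t₀ t₁ : ℝ) (r : ℕ) (K : ℕ → Polynomial ℝ) (z : ℝ) : Polynomial ℝ :=
  Polynomial.C (z / (t₁ - t₀)) *
    ∑ i ∈ Finset.range (r + 1), Polynomial.C (2 * (i : ℝ) + 1) * K i

/-- The scalar dG operator `Γ_λ(v) = v' + L(v(t₀)) + λ v`. -/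
noncomputable def Gam (t₀ t₁ : ℝ) (r : ℕ) (K : ℕ → Polynomial ℝ) (lam : ℝ)
    (v : Polynomial ℝ) : Polynomial ℝ :=
  Polynomial.derivative v + Lop t₀ t₁ r K (v.eval t₀) + Polynomial.C lam * v

/-!
Test the equation with `φ` itself. Both lifting operators are multiples of the reproducing kernel
`(1/k) ∑_{i ≤ r} (2i+1) K_i(s) K_i` of `P^r` in `L²(I)` (at `s = t₀` resp. `s = t₁`), so
`∫ L(1) φ = φ(t₀)` and `∫ L̂(φ(t₁)) φ = φ(t₁)²`, while `∫ φ' φ = (φ(t₁)² - φ(t₀)²)/2`.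
-/

theorem Polynomial.integral_derivative_mul_self (p : ℝ[X]) (a b : ℝ) :
    ∫ t in a..b, (derivative p).eval t * p.eval t = (p.eval b ^ 2 - p.eval a ^ 2) / 2 := by
  have hparts := integral_deriv_mul_eq_sub (fun x _ => p.hasDerivAt x) (fun x _ => p.hasDerivAt x)
    ((derivative p).continuous.intervalIntegrable a b)
    ((derivative p).continuous.intervalIntegrable a b)
  have hsym : (fun t => (derivative p).eval t * p.eval t + p.eval t * (derivative p).eval t)
      = fun t => 2 * ((derivative p).eval t * p.eval t) := by
    ext t; ring
  rw [hsym, intervalIntegral.integral_const_mul] at hparts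
  linear_combination hparts / 2

noncomputable def legendreKernel (t₀ t₁ : ℝ) (r : ℕ) (K : ℕ → ℝ[X]) (s : ℝ) : ℝ[X] :=
  ∑ i ∈ Finset.range (r + 1), C ((2 * (i : ℝ) + 1) * (K i).eval s / (t₁ - t₀)) * K i

namespace IsLegendreBasis

variable {t₀ t₁ : ℝ} {K : ℕ → ℝ[X]}

theorem ne_zero (hK : IsLegendreBasis t₀ t₁ K) (i : ℕ) : K i ≠ 0 := by
  intro h
  simpa [h] using hK.2.1 i

noncomputable def toSequence (hK : IsLegendreBasis t₀ t₁ K) : Polynomial.Sequence ℝ where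
  elems' := K
  degree_eq' i := by rw [degree_eq_natDegree (hK.ne_zero i), hK.1 i]

theorem exists_sum_eq (hK : IsLegendreBasis t₀ t₁ K) {r : ℕ} {p : ℝ[X]} (hp : p.natDegree ≤ r) :
    ∃ c : ℕ → ℝ, ∑ j ∈ Finset.range (r + 1), c j • K j = p := by
  have hspan := hK.toSequence.span_degreeLT (m := r + 1)
    fun i _ => isUnit_iff_ne_zero.mpr (leadingCoeff_ne_zero.mpr (hK.ne_zero i))
  have hmem : p ∈ Submodule.span ℝ (K '' ↑(Finset.range (r + 1))) := by
    rw [Finset.coe_range]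
    exact hspan ▸ mem_degreeLT.mpr
      (degree_le_natDegree.trans_lt (by exact_mod_cast Nat.lt_succ_of_le hp))
  exact (Submodule.mem_span_image_finset_iff_exists_fun' ℝ).mp hmem

theorem integral_sum_mul (hK : IsLegendreBasis t₀ t₁ K) (b : ℕ → ℝ) {r j : ℕ} (hj : j ≤ r) :
    ∫ t in t₀..t₁, (∑ i ∈ Finset.range (r + 1), b i * (K i).eval t) * (K j).eval t
      = b j * ((t₁ - t₀) / (2 * (j : ℝ) + 1)) := by
  simp_rw [Finset.sum_mul, mul_assoc]
  rw [integral_finsetSum fun i _ => Continuous.intervalIntegrable (by fun_prop) _ _]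
  simp_rw [intervalIntegral.integral_const_mul, hK.2.2.2, mul_ite, mul_zero]
  rw [Finset.sum_ite_eq', if_pos (Finset.mem_range_succ_iff.mpr hj)]

theorem integral_legendreKernel_mul (hK : IsLegendreBasis t₀ t₁ K) (ht : t₀ ≠ t₁) {r : ℕ}
    (s : ℝ) {p : ℝ[X]} (hp : p.natDegree ≤ r) :
    ∫ t in t₀..t₁, (legendreKernel t₀ t₁ r K s).eval t * p.eval t = p.eval s := by
  obtain ⟨c, rfl⟩ := hK.exists_sum_eq hp
  have hk : t₁ - t₀ ≠ 0 := sub_ne_zero.mpr ht.symm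
  have hKj : ∀ j ∈ Finset.range (r + 1),
      ∫ t in t₀..t₁, (legendreKernel t₀ t₁ r K s).eval t * (c j * (K j).eval t)
        = c j * (K j).eval s := by
    intro j hj
    simp_rw [mul_left_comm _ (c j), intervalIntegral.integral_const_mul, legendreKernel,
      eval_finsetSum, eval_mul, eval_C]
    rw [hK.integral_sum_mul _ (Finset.mem_range_succ_iff.mp hj)]
    field_simp
  simp_rw [eval_finsetSum, eval_smul, smul_eq_mul, Finset.mul_sum]
  rw [integral_finsetSum fun j _ => Continuous.intervalIntegrable (by fun_prop) _ _]
  exact Finset.sum_congr rfl hKj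

theorem Lop_eq (hK : IsLegendreBasis t₀ t₁ K) (r : ℕ) (z : ℝ) :
    Lop t₀ t₁ r K z = C z * legendreKernel t₀ t₁ r K t₀ := by
  simp only [Lop, legendreKernel, Finset.mul_sum, ← mul_assoc, ← C_mul, hK.2.2.1]
  refine Finset.sum_congr rfl fun i _ => ?_
  congr 2
  ring

theorem LopE_eq (hK : IsLegendreBasis t₀ t₁ K) (r : ℕ) (z : ℝ) :
    LopE t₀ t₁ r K z = C z * legendreKernel t₀ t₁ r K t₁ := by
  simp only [LopE, legendreKernel, Finset.mul_sum, ← mul_assoc, ← C_mul, hK.2.1]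
  refine Finset.sum_congr rfl fun i _ => ?_
  congr 2
  ring

theorem integral_Lop_mul (hK : IsLegendreBasis t₀ t₁ K) (ht : t₀ ≠ t₁) (z : ℝ) {r : ℕ}
    {p : ℝ[X]} (hp : p.natDegree ≤ r) :
    ∫ t in t₀..t₁, (Lop t₀ t₁ r K z).eval t * p.eval t = z * p.eval t₀ := by
  simp_rw [hK.Lop_eq, eval_mul, eval_C, mul_assoc, intervalIntegral.integral_const_mul,
    hK.integral_legendreKernel_mul ht t₀ hp]

theorem integral_LopE_mul (hK : IsLegendreBasis t₀ t₁ K) (ht : t₀ ≠ t₁) (z : ℝ) {r : ℕ}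
    {p : ℝ[X]} (hp : p.natDegree ≤ r) :
    ∫ t in t₀..t₁, (LopE t₀ t₁ r K z).eval t * p.eval t = z * p.eval t₁ := by
  simp_rw [hK.LopE_eq, eval_mul, eval_C, mul_assoc, intervalIntegral.integral_const_mul,
    hK.integral_legendreKernel_mul ht t₁ hp]

end IsLegendreBasis

theorem stmt_6_general (t₀ t₁ : ℝ) (ht : t₀ < t₁) (r : ℕ) (K : ℕ → Polynomial ℝ)
    (hK : IsLegendreBasis t₀ t₁ K) (lam : ℝ)
    (φ : Polynomial ℝ) (hφdeg : φ.natDegree ≤ r)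
    (hφ : Polynomial.derivative φ - Polynomial.C lam * φ - LopE t₀ t₁ r K (φ.eval t₁)
      = Lop t₀ t₁ r K 1) :
    2 * lam * (∫ t in t₀..t₁, (φ.eval t) ^ 2) + (φ.eval t₁) ^ 2
      = -(φ.eval t₀) * (2 + φ.eval t₀) := by
  have htest := congrArg (fun p : ℝ[X] => ∫ t in t₀..t₁, p.eval t * φ.eval t) hφ
  simp only [eval_sub, sub_mul] at htest
  rw [intervalIntegral.integral_sub (Continuous.intervalIntegrable (by fun_prop) _ _)
      (Continuous.intervalIntegrable (by fun_prop) _ _),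
    intervalIntegral.integral_sub (Continuous.intervalIntegrable (by fun_prop) _ _)
      (Continuous.intervalIntegrable (by fun_prop) _ _),
    φ.integral_derivative_mul_self, hK.integral_LopE_mul ht.ne _ hφdeg,
    hK.integral_Lop_mul ht.ne _ hφdeg] at htest
  simp only [eval_mul, eval_C, mul_assoc, intervalIntegral.integral_const_mul, ← sq] at htest
  linear_combination -2 * htest

/-- The energy identity `2λ ∫_I φ² + φ(t₁)² = -φ(t₀)(2 + φ(t₀))` for the dG dual solution. -/
theorem stmt_6 (t₀ t₁ : ℝ) (ht : t₀ < t₁) (r : ℕ) (K : ℕ → Polynomial ℝ)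
    (hK : IsLegendreBasis t₀ t₁ K) (lam : ℝ) (hlam : 0 < lam)
    (φ : Polynomial ℝ) (hφdeg : φ.natDegree ≤ r)
    (hφ : Polynomial.derivative φ - Polynomial.C lam * φ - LopE t₀ t₁ r K (φ.eval t₁)
      = Lop t₀ t₁ r K 1) :
    2 * lam * (∫ t in t₀..t₁, (φ.eval t) ^ 2) + (φ.eval t₁) ^ 2
      = -(φ.eval t₀) * (2 + φ.eval t₀) :=
  stmt_6_general t₀ t₁ ht r K hK lam φ hφdeg hφ
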